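/- arXiv:1507.03569 — 4 statements merged into one kernel-verified Lean document; each statement's English description precedes it below -/
import Mathlib

section
/- Let n ≥ 1 and let D* = L^n be the n-fold iterate of the operator (Lg)(r) = −(1/(2π))·g′(r)/sinh r. Then for every smooth function g : ℝ → ℂ and every r ∈ ℝ with r ≠ 0, the hyperbolic intertwining identity holds: (D*g)″(r) + 2n·(cosh r/sinh r)·(D*g)′(r) = (D*(g″ − n²·g))(r). -/
/-- The operator `L` given by `(L g)(r) = -(1/(2π)) g'(r)/sinh r`. -/
noncomputable def Lhyp (g : ℝ → ℂ) : ℝ → ℂ :=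
  fun r => -(1 / (2 * (Real.pi : ℂ))) * deriv g r / (Real.sinh r : ℂ)

/-!
Write `f' = sinh · u`, so that `L f = -u / (2π)`. Then `f'' = cosh · u + sinh · u'`, and a direct
computation gives `(Δₐ f - (2a + 1 + b) f)' = sinh · (Δ_{a+1} u - b u)`, where
`Δₐ = d²/dr² + 2a coth r d/dr`: `L` intertwines `Δₐ - (2a + 1 + b)` with `Δ_{a+1} - b`.
Iterating `n` times, the shifts add up to `(2a + 1) + (2a + 3) + ⋯ = (a + n)² - a²`;
the case `a = b = 0` is the theorem.
-/

open Filter Topology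
open scoped ContDiff

/-- The radial part of the Laplacian of `H^{2a+1}`. -/
noncomputable def radialLaplacian (a : ℂ) (f : ℝ → ℂ) : ℝ → ℂ :=
  fun r => deriv (deriv f) r + 2 * a * ((Real.cosh r : ℂ) / (Real.sinh r : ℂ)) * deriv f r

lemma ofReal_sinh_ne_zero {r : ℝ} (hr : r ≠ 0) : (Real.sinh r : ℂ) ≠ 0 :=
  Complex.ofReal_ne_zero.2 (Real.sinh_ne_zero.2 hr)

lemma contDiffOn_deriv {f : ℝ → ℂ} (hf : ContDiffOn ℝ ∞ f {0}ᶜ) :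
    ContDiffOn ℝ ∞ (deriv f) {0}ᶜ :=
  ((contDiffOn_infty_iff_deriv_of_isOpen isOpen_compl_singleton).1 hf).2

lemma hasDerivAt_of_contDiffOn {f : ℝ → ℂ} (hf : ContDiffOn ℝ ∞ f {0}ᶜ) {x : ℝ} (hx : x ≠ 0) :
    HasDerivAt f (deriv f x) x :=
  ((hf.contDiffAt (isOpen_compl_singleton.mem_nhds hx)).differentiableAt (by simp)).hasDerivAt

lemma contDiffOn_deriv_div_sinh {f : ℝ → ℂ} (hf : ContDiffOn ℝ ∞ f {0}ᶜ) :
    ContDiffOn ℝ ∞ (fun x => deriv f x / (Real.sinh x : ℂ)) {0}ᶜ := by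
  have hsinh : ContDiffOn ℝ ∞ (fun x : ℝ => (Real.sinh x : ℂ)) {0}ᶜ :=
    (Complex.ofRealCLM.contDiff.comp Real.contDiff_sinh).contDiffOn
  have h : ContDiffOn ℝ ∞ (fun x => deriv f x * (Real.sinh x : ℂ)⁻¹) {0}ᶜ :=
    (contDiffOn_deriv hf).mul (hsinh.inv fun _ hx => ofReal_sinh_ne_zero hx)
  simpa only [div_eq_mul_inv] using h

lemma hasDerivAt_ofReal_sinh (x : ℝ) :
    HasDerivAt (fun s : ℝ => (Real.sinh s : ℂ)) (Real.cosh x : ℂ) x :=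
  (Real.hasDerivAt_sinh x).ofReal_comp

lemma hasDerivAt_ofReal_cosh (x : ℝ) :
    HasDerivAt (fun s : ℝ => (Real.cosh s : ℂ)) (Real.sinh x : ℂ) x :=
  (Real.hasDerivAt_cosh x).ofReal_comp

namespace Lhyp

lemma eq_const_mul_deriv_div_sinh (f : ℝ → ℂ) :
    Lhyp f = fun x => -(1 / (2 * (Real.pi : ℂ))) * (deriv f x / (Real.sinh x : ℂ)) := by
  funext x
  exact mul_div_assoc _ _ _

lemma contDiffOn {f : ℝ → ℂ} (hf : ContDiffOn ℝ ∞ f {0}ᶜ) : ContDiffOn ℝ ∞ (Lhyp f) {0}ᶜ := by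
  rw [eq_const_mul_deriv_div_sinh]
  exact contDiffOn_const.mul (contDiffOn_deriv_div_sinh hf)

lemma radialLaplacian_sub {f : ℝ → ℂ} (hf : ContDiffOn ℝ ∞ f {0}ᶜ) (a b : ℂ) {r : ℝ}
    (hr : r ≠ 0) :
    radialLaplacian (a + 1) (Lhyp f) r - b * Lhyp f r
      = Lhyp (fun s => radialLaplacian a f s - (2 * a + 1 + b) * f s) r := by
  obtain ⟨u, hu_def⟩ : ∃ u : ℝ → ℂ, u = fun x => deriv f x / (Real.sinh x : ℂ) := ⟨_, rfl⟩
  have hu : ContDiffOn ℝ ∞ u {0}ᶜ := hu_def ▸ contDiffOn_deriv_div_sinh hf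
  have hu' := contDiffOn_deriv hu
  have hf1 : ∀ x ≠ 0, deriv f x = Real.sinh x * u x := fun x hx => by
    rw [hu_def, mul_div_cancel₀ _ (ofReal_sinh_ne_zero hx)]
  have hf2 : ∀ x ≠ 0, deriv (deriv f) x = Real.cosh x * u x + Real.sinh x * deriv u x := by
    intro x hx
    have h : deriv f =ᶠ[𝓝 x] fun y => Real.sinh y * u y := by
      filter_upwards [isOpen_compl_singleton.mem_nhds hx] with y hy using hf1 y hy
    rw [h.deriv_eq]
    exact ((hasDerivAt_ofReal_sinh x).mul (hasDerivAt_of_contDiffOn hu hx)).deriv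
  have hW : (fun s => radialLaplacian a f s - (2 * a + 1 + b) * f s) =ᶠ[𝓝 r]
      fun s => (2 * a + 1) * Real.cosh s * u s + Real.sinh s * deriv u s
        - (2 * a + 1 + b) * f s := by
    filter_upwards [isOpen_compl_singleton.mem_nhds hr] with x hx
    simp only [radialLaplacian]
    rw [hf1 x hx, hf2 x hx]
    have := ofReal_sinh_ne_zero hx
    field_simp
    ring
  have hW' : deriv (fun s => (2 * a + 1) * Real.cosh s * u s + Real.sinh s * deriv u s
        - (2 * a + 1 + b) * f s) r = _ :=
    ((((hasDerivAt_ofReal_cosh r).const_mul (2 * a + 1)).mul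
      (hasDerivAt_of_contDiffOn hu hr)).add ((hasDerivAt_ofReal_sinh r).mul
      (hasDerivAt_of_contDiffOn hu' hr))).sub ((hasDerivAt_of_contDiffOn hf hr).const_mul
      (2 * a + 1 + b)) |>.deriv
  have hLf : Lhyp f = fun x => -(1 / (2 * (Real.pi : ℂ))) * u x :=
    hu_def ▸ eq_const_mul_deriv_div_sinh f
  rw [hLf, Lhyp, hW.deriv_eq, hW']
  simp only [radialLaplacian, deriv_const_mul_field', hf1 r hr]
  have := ofReal_sinh_ne_zero hr
  field_simp
  ring

lemma eqOn_of_eqOn {f g : ℝ → ℂ} (h : Set.EqOn f g {0}ᶜ) :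
    Set.EqOn (Lhyp f) (Lhyp g) {0}ᶜ := fun x hx => by
  rw [Lhyp, Lhyp, (eventuallyEq_of_mem (isOpen_compl_singleton.mem_nhds hx) h).deriv_eq]

lemma iterate_eqOn_of_eqOn (n : ℕ) {f g : ℝ → ℂ} (h : Set.EqOn f g {0}ᶜ) :
    Set.EqOn (Lhyp^[n] f) (Lhyp^[n] g) {0}ᶜ := by
  induction n generalizing f g with
  | zero => exact h
  | succ n ih => exact ih (eqOn_of_eqOn h)

lemma radialLaplacian_iterate_sub (n : ℕ) {f : ℝ → ℂ} (hf : ContDiffOn ℝ ∞ f {0}ᶜ) (a b : ℂ)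
    {r : ℝ} (hr : r ≠ 0) :
    radialLaplacian (a + n) (Lhyp^[n] f) r - b * Lhyp^[n] f r
      = Lhyp^[n] (fun s => radialLaplacian a f s - ((a + n) ^ 2 - a ^ 2 + b) * f s) r := by
  induction n generalizing f a with
  | zero => simp
  | succ n ih =>
    have hn : a + ((n + 1 : ℕ) : ℂ) = a + 1 + n := by push_cast; ring
    rw [Function.iterate_succ_apply, Function.iterate_succ_apply, hn, ih (contDiffOn hf)]
    refine iterate_eqOn_of_eqOn n (fun s hs => ?_) hr
    convert radialLaplacian_sub hf a _ hs using 4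
    ring

end Lhyp

theorem stmt_0_general (n : ℕ) (g : ℝ → ℂ) (hg : ContDiff ℝ (⊤ : ℕ∞) g)
    (r : ℝ) (hr : r ≠ 0) :
    deriv (deriv (Lhyp^[n] g)) r
      + 2 * (n : ℂ) * ((Real.cosh r : ℂ) / (Real.sinh r : ℂ)) * deriv (Lhyp^[n] g) r
      = Lhyp^[n] (fun s => deriv (deriv g) s - (n : ℂ) ^ 2 * g s) r := by
  simpa [radialLaplacian] using Lhyp.radialLaplacian_iterate_sub n hg.contDiffOn 0 0 hr

/-- Intertwining property of `D* = L^n` with the radial hyperbolic Laplacian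
on `H^{2n+1}`. -/
theorem stmt_0 (n : ℕ) (hn : 1 ≤ n) (g : ℝ → ℂ) (hg : ContDiff ℝ (⊤ : ℕ∞) g)
    (r : ℝ) (hr : r ≠ 0) :
    deriv (deriv (Lhyp^[n] g)) r
      + 2 * (n : ℂ) * ((Real.cosh r : ℂ) / (Real.sinh r : ℂ)) * deriv (Lhyp^[n] g) r
      = Lhyp^[n] (fun s => deriv (deriv g) s - (n : ℂ) ^ 2 * g s) r :=
  stmt_0_general n g hg r hr
end

section
/- Let n ≥ 1 and define γ(t, r) = e^{−t n²/2} · (L^n G_t)(r), where G_t(r) = e^{−r²/(2t)}/√(2πt) and L is the n-fold iterated operator (Lg)(r) = −(1/(2π))·g′(r)/sinh r. Then γ satisfies the radial hyperbolic heat equation: for every t > 0 and every r ∈ ℝ with r ≠ 0, ∂γ/∂t (t, r) = (1/2)·( ∂²γ/∂r² (t, r) + 2n·(cosh r/sinh r)·∂γ/∂r (t, r) ). -/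
/-- The heat kernel of `H^{2n+1}`, `γ(t,r) = e^{-tn²/2} (Lⁿ G_t)(r)`, where
`G_t(r) = e^{-r²/(2t)}/√(2πt)` is the one-dimensional Euclidean heat kernel. -/
noncomputable def gammaHyp (n : ℕ) (t : ℝ) : ℝ → ℂ :=
  fun r => (Real.exp (-(t * (n : ℝ) ^ 2) / 2) : ℂ) *
    Lhyp^[n] (fun s => ((Real.exp (-(s ^ 2) / (2 * t)) / Real.sqrt (2 * Real.pi * t) : ℝ) : ℂ)) r

open Filter Topology Function
open scoped ContDiff

section Partial

variable {E : Type*} [NormedAddCommGroup E] [NormedSpace ℝ E]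

theorem DifferentiableAt.hasDerivAt_comp_prodMk_fst {g : ℝ × ℝ → E} {p : ℝ × ℝ}
    (hg : DifferentiableAt ℝ g p) :
    HasDerivAt (fun u => g (u, p.2)) (fderiv ℝ g p (1, 0)) p.1 :=
  hg.hasFDerivAt.comp_hasDerivAt_of_eq p.1 ((hasDerivAt_id _).prodMk (hasDerivAt_const _ _)) rfl

theorem DifferentiableAt.hasDerivAt_comp_prodMk_snd {g : ℝ × ℝ → E} {p : ℝ × ℝ}
    (hg : DifferentiableAt ℝ g p) :
    HasDerivAt (fun s => g (p.1, s)) (fderiv ℝ g p (0, 1)) p.2 :=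
  hg.hasFDerivAt.comp_hasDerivAt_of_eq p.2 ((hasDerivAt_const _ _).prodMk (hasDerivAt_id _)) rfl

theorem ContDiffOn.uncurry_deriv {f : ℝ → ℝ → E} {s : Set (ℝ × ℝ)} {m n : WithTop ℕ∞}
    (hf : ContDiffOn ℝ n (uncurry f) s) (hs : IsOpen s) (hmn : m + 1 ≤ n) :
    ContDiffOn ℝ m (uncurry fun t => deriv (f t)) s := by
  refine ((hf.fderiv_of_isOpen hs hmn).clm_apply
    (contDiffOn_const (c := ((0 : ℝ), (1 : ℝ))))).congr fun p hp => ?_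
  have hdiff : DifferentiableAt ℝ (uncurry f) p :=
    (hf.contDiffAt (hs.mem_nhds hp)).differentiableAt (by rintro rfl; simp at hmn)
  exact hdiff.hasDerivAt_comp_prodMk_snd.deriv

theorem deriv_deriv_comm {f : ℝ → ℝ → E} {t r : ℝ} (hf : ContDiffAt ℝ 2 (uncurry f) (t, r)) :
    deriv (fun u => deriv (f u) r) t = deriv (fun s => deriv (fun u => f u s) t) r := by
  have hdiff : ∀ᶠ p in 𝓝 (t, r), DifferentiableAt ℝ (uncurry f) p := by
    filter_upwards [hf.eventually (by simp)] with p hp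
    exact hp.differentiableAt (by simp)
  have hdiff2 : DifferentiableAt ℝ (fderiv ℝ (uncurry f)) (t, r) :=
    (hf.fderiv_right (m := 1) (by norm_num)).differentiableAt one_ne_zero
  have hleft : (fun u => deriv (f u) r) =ᶠ[𝓝 t] fun u => fderiv ℝ (uncurry f) (u, r) (0, 1) := by
    filter_upwards [(Continuous.prodMk_left r).continuousAt.eventually hdiff] with u hu
    exact hu.hasDerivAt_comp_prodMk_snd.deriv
  have hright : (fun s => deriv (fun u => f u s) t) =ᶠ[𝓝 r]
      fun s => fderiv ℝ (uncurry f) (t, s) (1, 0) := by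
    filter_upwards [(Continuous.prodMk_right t).continuousAt.eventually hdiff] with s hs
    exact hs.hasDerivAt_comp_prodMk_fst.deriv
  rw [hleft.deriv_eq, hright.deriv_eq,
    (hdiff2.hasDerivAt_comp_prodMk_fst.clm_apply (hasDerivAt_const _ _)).deriv,
    (hdiff2.hasDerivAt_comp_prodMk_snd.clm_apply (hasDerivAt_const _ _)).deriv]
  simpa using hf.isSymmSndFDerivAt (by simp) (1, 0) (0, 1)

end Partial

noncomputable def hypRadialLaplacian (n : ℕ) (f : ℝ → ℂ) (r : ℝ) : ℂ :=
  deriv (deriv f) r + 2 * n * ((Real.cosh r : ℂ) / (Real.sinh r : ℂ)) * deriv f r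

theorem sinh_ofReal_ne_zero {x : ℝ} (hx : x ≠ 0) : (Real.sinh x : ℂ) ≠ 0 :=
  Complex.ofReal_ne_zero.2 (Real.sinh_ne_zero.2 hx)

theorem hasDerivAt_Lhyp {f : ℝ → ℂ} {a : ℂ} {r : ℝ} (hf : HasDerivAt (deriv f) a r)
    (hr : r ≠ 0) :
    HasDerivAt (Lhyp f) ((-(1 / (2 * (Real.pi : ℂ))) * a * Real.sinh r
      - -(1 / (2 * (Real.pi : ℂ))) * deriv f r * Real.cosh r) / (Real.sinh r : ℂ) ^ 2) r := by
  have := (hf.const_mul (-(1 / (2 * (Real.pi : ℂ))))).div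
    (Real.hasDerivAt_sinh r).ofReal_comp (sinh_ofReal_ne_zero hr)
  exact this.congr_deriv (by ring)

theorem Lhyp_hypRadialLaplacian_add (n : ℕ) {f : ℝ → ℂ} {s : Set ℝ} (hs : IsOpen s)
    (hf : ContDiffOn ℝ 3 f s) {r : ℝ} (hrs : r ∈ s) (hr : r ≠ 0) :
    Lhyp (fun x => hypRadialLaplacian n f x + n ^ 2 * f x) r
      = hypRadialLaplacian (n + 1) (Lhyp f) r + (n + 1) ^ 2 * Lhyp f r := by
  have hf1 : ContDiffOn ℝ 2 (deriv f) s := hf.deriv_of_isOpen hs (by norm_num)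
  have hf2 : ContDiffOn ℝ 1 (deriv (deriv f)) s := hf1.deriv_of_isOpen hs (by norm_num)
  have hderiv : ∀ {g : ℝ → ℂ} {k : WithTop ℕ∞}, ContDiffOn ℝ k g s → k ≠ 0 → ∀ x ∈ s,
      HasDerivAt g (deriv g x) x := fun hg hk x hx =>
    ((hg.contDiffAt (hs.mem_nhds hx)).differentiableAt hk).hasDerivAt
  have hD : deriv (Lhyp f) =ᶠ[𝓝 r] fun x => (-(1 / (2 * (Real.pi : ℂ))) * deriv (deriv f) x
      * Real.sinh x - -(1 / (2 * (Real.pi : ℂ))) * deriv f x * Real.cosh x)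
        / (Real.sinh x : ℂ) ^ 2 := by
    filter_upwards [hs.mem_nhds hrs, isOpen_compl_singleton.mem_nhds hr] with x hxs hx
    exact (hasDerivAt_Lhyp (hderiv hf1 (by simp) x hxs) hx).deriv
  have hsh := (Real.hasDerivAt_sinh r).ofReal_comp
  have hch := (Real.hasDerivAt_cosh r).ofReal_comp
  have h0 := hderiv hf (by simp) r hrs
  have h1 := hderiv hf1 (by simp) r hrs
  have h2 := hderiv hf2 (by simp) r hrs
  have hsh0 := sinh_ofReal_ne_zero hr
  have hL := (((h2.const_mul (-(1 / (2 * (Real.pi : ℂ))))).fun_mul hsh).fun_sub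
    ((h1.const_mul (-(1 / (2 * (Real.pi : ℂ))))).fun_mul hch)).fun_div (hsh.fun_pow 2)
    (pow_ne_zero 2 hsh0)
  have hR := (h2.fun_add (((hch.fun_div hsh hsh0).const_mul (2 * (n : ℂ))).fun_mul h1)).fun_add
    (h0.const_mul ((n : ℂ) ^ 2))
  rw [hypRadialLaplacian, hD.deriv_eq, hL.deriv, (hasDerivAt_Lhyp h1 hr).deriv]
  simp only [Lhyp, hypRadialLaplacian, hR.deriv]
  field_simp
  push_cast
  ring

noncomputable def heatKernel (t x : ℝ) : ℂ :=
  ((Real.exp (-(x ^ 2) / (2 * t)) / Real.sqrt (2 * Real.pi * t) : ℝ) : ℂ)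

theorem contDiffOn_uncurry_heatKernel {n : WithTop ℕ∞} :
    ContDiffOn ℝ n (uncurry heatKernel) {p | 0 < p.1} := by
  intro p (hp : 0 < p.1)
  have hq : 2 * Real.pi * p.1 ≠ 0 := by positivity
  refine (Complex.ofRealCLM.contDiff.contDiffAt.comp p ?_).contDiffWithinAt
  refine ContDiffAt.div ?_ ((Real.contDiffAt_sqrt hq).comp p (by fun_prop)) (by positivity)
  exact Real.contDiff_exp.contDiffAt.comp p ((contDiff_snd.pow 2).neg.contDiffAt.div
    (by fun_prop) (by positivity))

theorem hasDerivAt_heatKernel (t x : ℝ) :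
    HasDerivAt (heatKernel t) (-(x / t) * heatKernel t x) x := by
  have hexp := (((hasDerivAt_pow 2 x).neg.div_const (2 * t)).exp.div_const
    (Real.sqrt (2 * Real.pi * t))).ofReal_comp
  refine hexp.congr_deriv ?_
  simp only [heatKernel, Pi.neg_apply]
  push_cast
  ring

theorem deriv_deriv_heatKernel (t x : ℝ) :
    deriv (deriv (heatKernel t)) x = (x ^ 2 / t ^ 2 - 1 / t) * heatKernel t x := by
  have hderiv : deriv (heatKernel t) = fun y => -(y / t) * heatKernel t y :=
    funext fun y => (hasDerivAt_heatKernel t y).deriv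
  rw [hderiv]
  refine ((((hasDerivAt_id (x : ℂ)).comp_ofReal.div_const (t : ℂ)).neg.mul
    (hasDerivAt_heatKernel t x)).congr_deriv ?_).deriv
  simp only [id, Pi.neg_apply]
  ring

theorem hasDerivAt_heatKernel_time {t : ℝ} (ht : 0 < t) (x : ℝ) :
    HasDerivAt (fun u => heatKernel u x)
      ((x ^ 2 / (2 * t ^ 2) - 1 / (2 * t)) * heatKernel t x) t := by
  have hq : 0 < 2 * Real.pi * t := by positivity
  have hsqrt : HasDerivAt (fun u => Real.sqrt (2 * Real.pi * u))
      (1 / (2 * Real.sqrt (2 * Real.pi * t)) * (2 * Real.pi)) t :=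
    (Real.hasDerivAt_sqrt hq.ne').comp t ((hasDerivAt_id t).const_mul (2 * Real.pi) |>.congr_deriv
      (mul_one _))
  have hinner : HasDerivAt (fun u => -(x ^ 2) / (2 * u)) (x ^ 2 / (2 * t ^ 2)) t :=
    ((hasDerivAt_const t (-(x ^ 2))).div ((hasDerivAt_id t).const_mul 2)
      (by simp [ht.ne'])).congr_deriv (by simp only [id]; field_simp; ring)
  have hsq : (Real.sqrt (2 * Real.pi * t) : ℂ) ^ 2 = 2 * Real.pi * t := by
    exact_mod_cast Real.sq_sqrt hq.le
  have hsqrt0 : (Real.sqrt (2 * Real.pi * t) : ℂ) ≠ 0 := by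
    exact_mod_cast (Real.sqrt_pos.2 hq).ne'
  have ht0 : (t : ℂ) ≠ 0 := by exact_mod_cast ht.ne'
  refine (hinner.exp.div hsqrt (Real.sqrt_pos.2 hq).ne').ofReal_comp.congr_deriv ?_
  simp only [heatKernel]
  push_cast
  field_simp
  linear_combination (t : ℂ) * hsq

theorem heatKernel_heat_eq {t : ℝ} (ht : 0 < t) (x : ℝ) :
    deriv (fun u => heatKernel u x) t = 1 / 2 * deriv (deriv (heatKernel t)) x := by
  rw [(hasDerivAt_heatKernel_time ht x).deriv, deriv_deriv_heatKernel]
  ring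

theorem ContDiffOn.uncurry_Lhyp {w : ℝ → ℝ → ℂ} {s : Set (ℝ × ℝ)} {m n : WithTop ℕ∞}
    (hw : ContDiffOn ℝ n (uncurry w) s) (hs : IsOpen s) (hmn : m + 1 ≤ n)
    (hs0 : ∀ p ∈ s, p.2 ≠ 0) :
    ContDiffOn ℝ m (uncurry fun t => Lhyp (w t)) s :=
  ((contDiffOn_const.mul (hw.uncurry_deriv hs hmn)).mul
    ((Complex.ofRealCLM.contDiff.comp (Real.contDiff_sinh.comp contDiff_snd)).contDiffOn.inv
      fun p hp => sinh_ofReal_ne_zero (hs0 p hp))).congr fun _ _ => div_eq_mul_inv _ _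

/-- The shift by `n²` is what the factor `e^{-tn²/2}` in `gammaHyp` removes. -/
def SolvesShiftedHeatEqOn (n : ℕ) (w : ℝ → ℝ → ℂ) (s : Set (ℝ × ℝ)) : Prop :=
  ∀ p ∈ s, deriv (fun u => w u p.2) p.1
    = 1 / 2 * (hypRadialLaplacian n (w p.1) p.2 + n ^ 2 * w p.1 p.2)

theorem SolvesShiftedHeatEqOn.map_Lhyp {n : ℕ} {w : ℝ → ℝ → ℂ} {s : Set (ℝ × ℝ)}
    (hsol : SolvesShiftedHeatEqOn n w s) (hw : ContDiffOn ℝ 3 (uncurry w) s) (hs : IsOpen s)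
    (hs0 : ∀ p ∈ s, p.2 ≠ 0) :
    SolvesShiftedHeatEqOn (n + 1) (fun t => Lhyp (w t)) s := by
  rintro ⟨t, r⟩ hp
  have hslice_open : IsOpen {x | (t, x) ∈ s} := hs.preimage (Continuous.prodMk_right t)
  have hslice : ContDiffOn ℝ 3 (w t) {x | (t, x) ∈ s} :=
    hw.comp (contDiff_prodMk_right t).contDiffOn fun _ hx => hx
  have hsol_near : (fun x => deriv (fun u => w u x) t) =ᶠ[𝓝 r]
      fun x => 1 / 2 * (hypRadialLaplacian n (w t) x + n ^ 2 * w t x) := by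
    filter_upwards [hslice_open.mem_nhds hp] with x hx
    exact hsol (t, x) hx
  have hclairaut := deriv_deriv_comm ((hw.contDiffAt (hs.mem_nhds hp)).of_le (by norm_num))
  calc deriv (fun u => Lhyp (w u) r) t
      = -(1 / (2 * (Real.pi : ℂ))) * deriv (fun u => deriv (w u) r) t / (Real.sinh r : ℂ) := by
        simp only [Lhyp, deriv_div_const, deriv_const_mul_field]
    _ = 1 / 2 * Lhyp (fun x => hypRadialLaplacian n (w t) x + n ^ 2 * w t x) r := by
        rw [hclairaut, hsol_near.deriv_eq, deriv_const_mul_field, Lhyp]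
        ring
    _ = _ := by
        rw [Lhyp_hypRadialLaplacian_add n hslice_open hslice hp (hs0 _ hp)]
        push_cast
        ring

def hypHeatDomain : Set (ℝ × ℝ) := {p | 0 < p.1 ∧ p.2 ≠ 0}

theorem isOpen_hypHeatDomain : IsOpen hypHeatDomain :=
  (isOpen_lt continuous_const continuous_fst).inter
    (isOpen_compl_singleton.preimage continuous_snd)

theorem contDiffOn_and_solvesShiftedHeatEqOn_iterate_Lhyp_heatKernel (n : ℕ) :
    ContDiffOn ℝ ∞ (uncurry fun t => Lhyp^[n] (heatKernel t)) hypHeatDomain ∧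
      SolvesShiftedHeatEqOn n (fun t => Lhyp^[n] (heatKernel t)) hypHeatDomain := by
  have hs0 : ∀ p ∈ hypHeatDomain, p.2 ≠ 0 := fun _ hp => hp.2
  induction n with
  | zero =>
    refine ⟨contDiffOn_uncurry_heatKernel.mono fun _ hp => hp.1, fun p hp => ?_⟩
    simp [hypRadialLaplacian, heatKernel_heat_eq hp.1]
  | succ n ih =>
    simp only [Function.iterate_succ_apply']
    exact ⟨ih.1.uncurry_Lhyp isOpen_hypHeatDomain le_rfl hs0,
      ih.2.map_Lhyp (ih.1.of_le (by norm_cast)) isOpen_hypHeatDomain hs0⟩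

theorem stmt_4_general (n : ℕ) (t : ℝ) (ht : 0 < t) (r : ℝ) (hr : r ≠ 0) :
    deriv (fun u : ℝ => gammaHyp n u r) t
      = (1 / 2) * (deriv (deriv (gammaHyp n t)) r
          + 2 * (n : ℂ) * ((Real.cosh r : ℂ) / (Real.sinh r : ℂ)) * deriv (gammaHyp n t) r) := by
  obtain ⟨hsmooth, hsol⟩ := contDiffOn_and_solvesShiftedHeatEqOn_iterate_Lhyp_heatKernel n
  set w := fun t => Lhyp^[n] (heatKernel t)
  have hp : (t, r) ∈ hypHeatDomain := ⟨ht, hr⟩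
  have hw_time : DifferentiableAt ℝ (fun u => w u r) t :=
    ((hsmooth.contDiffAt (isOpen_hypHeatDomain.mem_nhds hp)).differentiableAt (by simp)
      |>.hasDerivAt_comp_prodMk_fst).differentiableAt
  have hexp : HasDerivAt (fun u : ℝ => (Real.exp (-(u * (n : ℝ) ^ 2) / 2) : ℂ))
      (Real.exp (-(t * (n : ℝ) ^ 2) / 2) * (-((n : ℝ) ^ 2) / 2) : ℝ) t :=
    ((((hasDerivAt_id t).mul_const _).neg.div_const 2).exp.congr_deriv (by simp)).ofReal_comp
  have hγ : ∀ u, gammaHyp n u = fun x => (Real.exp (-(u * (n : ℝ) ^ 2) / 2) : ℂ) * w u x :=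
    fun _ => rfl
  simp only [hγ, deriv_const_mul_field']
  rw [(hexp.fun_mul hw_time.hasDerivAt).deriv, hsol (t, r) hp, hypRadialLaplacian]
  push_cast
  ring

/-- `γ` satisfies the radial heat equation on `H^{2n+1}`. -/
theorem stmt_4 (n : ℕ) (hn : 1 ≤ n) (t : ℝ) (ht : 0 < t) (r : ℝ) (hr : r ≠ 0) :
    deriv (fun u : ℝ => gammaHyp n u r) t
      = (1 / 2) * (deriv (deriv (gammaHyp n t)) r
          + 2 * (n : ℂ) * ((Real.cosh r : ℂ) / (Real.sinh r : ℂ)) * deriv (gammaHyp n t) r) :=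
  stmt_4_general n t ht r hr
end

section
/- Let k ≥ 0 be an integer and λ ∈ ℝ. Suppose u : ℝ → ℂ is smooth on (−π, π), even, with u(0) = 1, and satisfies u″(r) + 2k·(cos r/sin r)·u′(r) = (λ² + k²)·u(r) for 0 < |r| < π; and suppose v : ℝ → ℂ is smooth on (−π, π), even, with v(0) = 1, and satisfies v″(r) + 2(k+1)·(cos r/sin r)·v′(r) = (λ² + (k+1)²)·v(r) for 0 < |r| < π. Then for all r with 0 < |r| < π: u′(r)/sin r = ((λ² + k²)/(2k+1))·v(r). -/
/-!
Put `w = u' / sin` and `d = (λ² + k²) / (2k + 1)`. Differentiating the equation of `u` shows that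
`w` solves the equation of index `k + 1` with eigenvalue `λ² + (k + 1)²`, like `v`. Since `u` is
even, `w → u''(0)` at `0⁺`, and the equation of `u` at `0` reads `(2k + 1) u''(0) = λ² + k²`, so
`w → d`. For two solutions of the equation of index `k + 1`, `sin^(2k+2)` times their Wronskian is
constant; for `w` and `v` it tends to `0` at `0⁺`, so the Wronskian vanishes and `w / v` is
constant, hence `= d`, near `0`. Then `w - d v` solves a regular linear equation on `(0, π)` and
vanishes to first order at some point, so it vanishes identically (Grönwall). Parity handles
`r < 0`.
-/

open Set Filter Topology Real

theorem eq_of_hasDerivAt_zero_of_tendsto {E : Type*} [NormedAddCommGroup E] [NormedSpace ℝ E]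
    {f : ℝ → E} {a b : ℝ} {L : E} (hf : ∀ t ∈ Ioo a b, HasDerivAt f 0 t)
    (hL : Tendsto f (𝓝[>] a) (𝓝 L)) : ∀ t ∈ Ioo a b, f t = L := by
  intro t ht
  have hconst : ∀ s ∈ Ioo a b, f s = f t := fun s hs =>
    isOpen_Ioo.is_const_of_deriv_eq_zero isPreconnected_Ioo
      (fun x hx => (hf x hx).differentiableAt.differentiableWithinAt)
      (fun x hx => (hf x hx).deriv) hs ht
  refine tendsto_nhds_unique (tendsto_const_nhds.congr' ?_) hL
  filter_upwards [Ioo_mem_nhdsGT (ht.1.trans ht.2)] with s hs using (hconst s hs).symm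

theorem tendsto_div_of_hasDerivAt {𝕜 F : Type*} [NontriviallyNormedField 𝕜] [NormedField F]
    [NormedAlgebra 𝕜 F] {f g : 𝕜 → F} {f' g' : F} {a : 𝕜} (hf : HasDerivAt f f' a)
    (hg : HasDerivAt g g' a) (hfa : f a = 0) (hga : g a = 0) (hg' : g' ≠ 0) :
    Tendsto (fun t => f t / g t) (𝓝[≠] a) (𝓝 (f' / g')) := by
  refine ((hasDerivAt_iff_tendsto_slope.1 hf).div (hasDerivAt_iff_tendsto_slope.1 hg)
    hg').congr' ?_
  filter_upwards [self_mem_nhdsWithin] with t ht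
  have hne : algebraMap 𝕜 F (t - a)⁻¹ ≠ 0 := by simpa [sub_eq_zero] using ht
  simp only [Pi.div_apply, slope_def_module, hfa, hga, sub_zero, Algebra.smul_def]
  exact mul_div_mul_left _ _ hne

theorem eq_zero_of_hasDerivAt_of_linear_ode {f f' a b : ℝ → ℂ} {t₀ t₁ : ℝ}
    (ha : ContinuousOn a (Icc t₀ t₁)) (hb : ContinuousOn b (Icc t₀ t₁))
    (hf : ∀ t ∈ Icc t₀ t₁, HasDerivAt f (f' t) t)
    (hf' : ∀ t ∈ Icc t₀ t₁, HasDerivAt f' (a t * f' t + b t * f t) t)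
    (h₀ : f t₀ = 0) (h₀' : f' t₀ = 0) : ∀ t ∈ Icc t₀ t₁, f t = 0 := by
  obtain ⟨Ma, hMa⟩ := isCompact_Icc.exists_bound_of_continuousOn ha
  obtain ⟨Mb, hMb⟩ := isCompact_Icc.exists_bound_of_continuousOn hb
  have hF : ∀ t ∈ Icc t₀ t₁,
      HasDerivAt (fun t => (f t, f' t)) (f' t, a t * f' t + b t * f t) t :=
    fun t ht => (hf t ht).prodMk (hf' t ht)
  have hbound : ∀ t ∈ Ico t₀ t₁, ‖(f' t, a t * f' t + b t * f t)‖ ≤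
      (1 + Ma + Mb) * ‖(f t, f' t)‖ := by
    intro t ht
    have h1 : ‖f t‖ ≤ ‖(f t, f' t)‖ := norm_fst_le (f t, f' t)
    have h2 : ‖f' t‖ ≤ ‖(f t, f' t)‖ := norm_snd_le (f t, f' t)
    have hMa' := hMa t (Ico_subset_Icc_self ht)
    have hMb' := hMb t (Ico_subset_Icc_self ht)
    have hMa0 : 0 ≤ Ma := (norm_nonneg _).trans hMa'
    have hMb0 : 0 ≤ Mb := (norm_nonneg _).trans hMb'
    have hlin : ‖a t * f' t + b t * f t‖ ≤ Ma * ‖f' t‖ + Mb * ‖f t‖ :=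
      (norm_add_le _ _).trans (by
        rw [norm_mul, norm_mul]
        gcongr)
    refine norm_prod_le_iff.2 ⟨?_, ?_⟩ <;> nlinarith [norm_nonneg (f t), norm_nonneg (f' t)]
  intro t ht
  have := eq_zero_of_abs_deriv_le_mul_abs_self_of_eq_zero_right
    (fun s hs => (hF s hs).continuousAt.continuousWithinAt)
    (fun s hs => (hF s (Ico_subset_Icc_self hs)).hasDerivWithinAt) (by simp [h₀, h₀']) hbound t ht
  exact congrArg Prod.fst this

/-- The radial eigenvalue equation `f'' + 2m cot t f' = c f` of the Laplacian on `S^(2m+1)`,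
on `(0, π)`, as a first-order system for the pair `(f, f')`. -/
def IsRadialSolution (m : ℕ) (c : ℂ) (f f' : ℝ → ℂ) : Prop :=
  ∀ t ∈ Ioo 0 π, HasDerivAt f (f' t) t ∧
    HasDerivAt f' (c * f t - 2 * m * ((cos t : ℂ) / (sin t : ℂ)) * f' t) t

theorem hasDerivAt_ofReal_sin (t : ℝ) : HasDerivAt (fun t : ℝ => (sin t : ℂ)) (cos t) t :=
  (hasDerivAt_sin t).ofReal_comp

theorem hasDerivAt_ofReal_cos (t : ℝ) : HasDerivAt (fun t : ℝ => (cos t : ℂ)) (-sin t) t := by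
  simpa using (hasDerivAt_cos t).ofReal_comp

theorem ofReal_sin_ne_zero {t : ℝ} (ht : t ∈ Ioo 0 π) : (sin t : ℂ) ≠ 0 :=
  Complex.ofReal_ne_zero.2 (sin_pos_of_pos_of_lt_pi ht.1 ht.2).ne'

namespace IsRadialSolution

variable {m : ℕ} {c : ℂ} {f f' g g' : ℝ → ℂ}

theorem sub_const_mul (hf : IsRadialSolution m c f f') (hg : IsRadialSolution m c g g') (L : ℂ) :
    IsRadialSolution m c (fun t => f t - L * g t) (fun t => f' t - L * g' t) := by
  intro t ht
  refine ⟨(hf t ht).1.fun_sub ((hg t ht).1.const_mul L), ?_⟩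
  refine ((hf t ht).2.fun_sub ((hg t ht).2.const_mul L)).congr_deriv ?_
  ring

theorem hasDerivAt_wronskian (hf : IsRadialSolution m c f f') (hg : IsRadialSolution m c g g')
    {t : ℝ} (ht : t ∈ Ioo 0 π) :
    HasDerivAt (fun t => (sin t : ℂ) ^ (2 * m) * (f' t * g t - f t * g' t)) 0 t := by
  have hs := ofReal_sin_ne_zero ht
  refine (((hasDerivAt_ofReal_sin t).fun_pow (2 * m)).fun_mul
    (((hf t ht).2.fun_mul (hg t ht).1).fun_sub ((hf t ht).1.fun_mul (hg t ht).2))).congr_deriv ?_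
  rcases m with _ | n
  · push_cast
    ring
  · rw [show 2 * (n + 1) - 1 = 2 * n + 1 by omega]
    field_simp
    push_cast
    ring

theorem div_sin (hf : IsRadialSolution m c f f') :
    IsRadialSolution (m + 1) (c + (2 * m + 1)) (fun t => f' t / sin t)
      (fun t => (c * f t - (2 * m + 1) * ((cos t : ℂ) / (sin t : ℂ)) * f' t) / sin t) := by
  intro t ht
  have hs := ofReal_sin_ne_zero ht
  have hS := hasDerivAt_ofReal_sin t
  have hC := hasDerivAt_ofReal_cos t
  constructor
  · refine ((hf t ht).2.fun_div hS hs).congr_deriv ?_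
    field_simp
    ring
  · refine ((((hf t ht).1.const_mul c).fun_sub
      (((hC.fun_div hS hs).const_mul (2 * (m : ℂ) + 1)).fun_mul (hf t ht).2)).fun_div
        hS hs).congr_deriv ?_
    simp only [Nat.cast_add, Nat.cast_one]
    field_simp
    ring

theorem eq_zero_of_eq_zero_at (hf : IsRadialSolution m c f f') {t₀ : ℝ} (ht₀ : 0 < t₀)
    (h₀ : f t₀ = 0) (h₀' : f' t₀ = 0) : ∀ t ∈ Ico t₀ π, f t = 0 := by
  intro t ht
  have hsub : Icc t₀ t ⊆ Ioo 0 π := fun s hs => ⟨ht₀.trans_le hs.1, hs.2.trans_lt ht.2⟩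
  refine eq_zero_of_hasDerivAt_of_linear_ode
    (a := fun s => -(2 * m * ((cos s : ℂ) / (sin s : ℂ)))) (b := fun _ => c) (f' := f') ?_
    continuousOn_const (fun s hs => (hf s (hsub hs)).1)
    (fun s hs => ?_) h₀ h₀' t (right_mem_Icc.2 ht.1)
  · exact ((ContinuousOn.div (by fun_prop) (by fun_prop) fun s hs =>
      ofReal_sin_ne_zero (hsub hs)).const_mul _).neg
  · exact (hf s (hsub hs)).2.congr_deriv (by ring)

theorem eq_const_mul_of_eqOn_Ioo (hf : IsRadialSolution m c f f') (hg : IsRadialSolution m c g g')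
    {L : ℂ} {δ : ℝ} (hδ : 0 < δ) (h : ∀ t ∈ Ioo 0 δ, f t = L * g t) :
    ∀ t ∈ Ioo 0 π, f t = L * g t := by
  intro t ht
  obtain ⟨t₀, ht₀pos, ht₀lt⟩ := exists_between (lt_min hδ ht.1)
  have ht₀ : t₀ ∈ Ioo 0 δ := ⟨ht₀pos, ht₀lt.trans_le (min_le_left δ t)⟩
  have ht₀t : t₀ ≤ t := (ht₀lt.trans_le (min_le_right δ t)).le
  have ht₀π : t₀ ∈ Ioo 0 π := ⟨ht₀pos, ht₀t.trans_lt ht.2⟩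
  have hderiv : f' t₀ = L * g' t₀ := by
    have hfg : f =ᶠ[𝓝 t₀] fun s => L * g s := eventually_of_mem (isOpen_Ioo.mem_nhds ht₀) h
    exact (hf t₀ ht₀π).1.unique (((hg t₀ ht₀π).1.const_mul L).congr_of_eventuallyEq hfg)
  have := (hf.sub_const_mul hg L).eq_zero_of_eq_zero_at ht₀pos (sub_eq_zero.2 (h t₀ ht₀))
    (sub_eq_zero.2 hderiv) t ⟨ht₀t, ht.2⟩
  exact sub_eq_zero.1 this

theorem eq_const_mul_of_tendsto (hf : IsRadialSolution m c f f')
    (hg : IsRadialSolution m c g g') {L : ℂ} (hfL : Tendsto f (𝓝[>] 0) (𝓝 L))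
    (hg1 : Tendsto g (𝓝[>] 0) (𝓝 1))
    (hW : Tendsto (fun t => (sin t : ℂ) ^ (2 * m) * (f' t * g t - f t * g' t)) (𝓝[>] 0) (𝓝 0)) :
    ∀ t ∈ Ioo 0 π, f t = L * g t := by
  have hW0 : ∀ t ∈ Ioo 0 π, f' t * g t - f t * g' t = 0 := fun t ht =>
    (mul_eq_zero.1 (eq_of_hasDerivAt_zero_of_tendsto (fun s hs => hf.hasDerivAt_wronskian hg hs)
      hW t ht)).resolve_left (pow_ne_zero _ (ofReal_sin_ne_zero ht))
  obtain ⟨δ, hδ, hδsub⟩ := mem_nhdsGT_iff_exists_Ioo_subset.1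
    (inter_mem (hg1.eventually_ne one_ne_zero) (Ioo_mem_nhdsGT pi_pos))
  have hratio : ∀ t ∈ Ioo 0 δ, f t / g t = L := by
    refine eq_of_hasDerivAt_zero_of_tendsto (fun t ht => ?_)
      (by simpa [Pi.div_def] using hfL.div hg1 one_ne_zero)
    obtain ⟨hgt, htπ⟩ := hδsub ht
    exact ((hf t htπ).1.fun_div (hg t htπ).1 hgt).congr_deriv (by rw [hW0 t htπ, zero_div])
  refine hf.eq_const_mul_of_eqOn_Ioo hg hδ fun t ht => ?_
  rw [← hratio t ht, div_mul_cancel₀ _ (hδsub ht).1]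

end IsRadialSolution

theorem deriv_neg_of_even {𝕜 F : Type*} [NontriviallyNormedField 𝕜] [NormedAddCommGroup F]
    [NormedSpace 𝕜 F] {f : 𝕜 → F} (hf : ∀ x, f (-x) = f x) (x : 𝕜) :
    deriv f (-x) = -deriv f x := by
  have h := deriv_comp_neg f x
  rw [show (fun y => f (-y)) = f from funext hf] at h
  rw [h, neg_neg]

theorem ContDiffOn.hasDerivAt_deriv {𝕜 F : Type*} [NontriviallyNormedField 𝕜]
    [NormedAddCommGroup F] [NormedSpace 𝕜 F] {f : 𝕜 → F} {s : Set 𝕜} {x : 𝕜} {n : WithTop ℕ∞}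
    (hf : ContDiffOn 𝕜 n f s) (hn : n ≠ 0) (hs : s ∈ 𝓝 x) : HasDerivAt f (deriv f x) x :=
  ((hf.contDiffAt hs).differentiableAt hn).hasDerivAt

theorem isRadialSolution_of_contDiffOn {m : ℕ} {c : ℂ} {f : ℝ → ℂ}
    (hf : ContDiffOn ℝ 2 f (Ioo 0 π))
    (hode : ∀ t ∈ Ioo 0 π,
      deriv (deriv f) t + 2 * m * ((cos t : ℂ) / (sin t : ℂ)) * deriv f t = c * f t) :
    IsRadialSolution m c f (deriv f) := fun t ht =>
  ⟨hf.hasDerivAt_deriv two_ne_zero (isOpen_Ioo.mem_nhds ht),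
    ((hf.deriv_of_isOpen isOpen_Ioo (by norm_num) : ContDiffOn ℝ 1 (deriv f) _).hasDerivAt_deriv
      one_ne_zero (isOpen_Ioo.mem_nhds ht)).congr_deriv (by linear_combination hode t ht)⟩

theorem tendsto_deriv_div_sin {m : ℕ} {c : ℂ} {f : ℝ → ℂ} {s : Set ℝ}
    (hf : ContDiffOn ℝ 2 f s) (hs : IsOpen s) (h0 : 0 ∈ s) (hf'0 : deriv f 0 = 0)
    (hode : ∀ t ∈ Ioo 0 π,
      deriv (deriv f) t + 2 * m * ((cos t : ℂ) / (sin t : ℂ)) * deriv f t = c * f t) :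
    Tendsto (fun t => deriv f t / sin t) (𝓝[>] 0) (𝓝 (c * f 0 / (2 * m + 1))) := by
  have hf1 : ContDiffOn ℝ 1 (deriv f) s := hf.deriv_of_isOpen hs (by norm_num)
  set A := deriv (deriv f) 0
  have hw : Tendsto (fun t => deriv f t / sin t) (𝓝[>] 0) (𝓝 A) := by
    have := tendsto_div_of_hasDerivAt (hf1.hasDerivAt_deriv one_ne_zero (hs.mem_nhds h0))
      (hasDerivAt_ofReal_sin 0) hf'0 (by simp) (by simp)
    rw [cos_zero, Complex.ofReal_one, div_one] at this
    exact this.mono_left (nhdsGT_le_nhdsNE 0)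
  have hlhs : Tendsto (fun t => deriv (deriv f) t + 2 * m * (cos t : ℂ) * (deriv f t / sin t))
      (𝓝[>] 0) (𝓝 (A + 2 * m * (cos 0 : ℂ) * A)) := by
    refine (((hf1.continuousOn_deriv_of_isOpen hs le_rfl).continuousAt
      (hs.mem_nhds h0)).tendsto.mono_left nhdsWithin_le_nhds).add (Tendsto.mul ?_ hw)
    exact (((Complex.continuous_ofReal.comp continuous_cos).tendsto 0).const_mul _).mono_left
      nhdsWithin_le_nhds
  have hrhs : Tendsto (fun t => deriv (deriv f) t + 2 * m * (cos t : ℂ) * (deriv f t / sin t))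
      (𝓝[>] 0) (𝓝 (c * f 0)) := by
    refine (((hf.continuousOn.continuousAt (hs.mem_nhds h0)).tendsto.const_mul c).mono_left
      nhdsWithin_le_nhds).congr' ?_
    filter_upwards [Ioo_mem_nhdsGT pi_pos] with t ht
    rw [← hode t ht]
    ring
  have hA : (2 * m + 1) * A = c * f 0 := by
    have := tendsto_nhds_unique hlhs hrhs
    simp only [cos_zero, Complex.ofReal_one, mul_one] at this
    linear_combination this
  rwa [← hA, mul_div_cancel_left₀ _ (by exact_mod_cast (2 * m).succ_ne_zero)]

theorem tendsto_sin_pow_mul_wronskian_div_sin {m : ℕ} {c : ℂ} {f f' g g' : ℝ → ℂ}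
    (hf : ContinuousAt f 0) (hf' : ContinuousAt f' 0) (hf'0 : f' 0 = 0)
    (hg : ContinuousAt g 0) (hg' : ContinuousAt g' 0) :
    Tendsto (fun t => (sin t : ℂ) ^ (2 * (m + 1)) *
      ((c * f t - (2 * m + 1) * ((cos t : ℂ) / (sin t : ℂ)) * f' t) / sin t * g t
        - f' t / sin t * g' t)) (𝓝[>] 0) (𝓝 0) := by
  have hcont : ContinuousAt (fun t => (sin t : ℂ) ^ (2 * m) *
      ((c * f t * sin t - (2 * m + 1) * cos t * f' t) * g t - sin t * f' t * g' t)) 0 := by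
    fun_prop
  have hlim := hcont.tendsto.mono_left (nhdsWithin_le_nhds (s := Ioi 0))
  simp only [sin_zero, Complex.ofReal_zero, hf'0, mul_zero, zero_mul, sub_self] at hlim
  refine hlim.congr' ?_
  filter_upwards [Ioo_mem_nhdsGT pi_pos] with t ht
  have := ofReal_sin_ne_zero ht
  field_simp
  ring

theorem deriv_div_sin_eq_const_mul {k : ℕ} {c : ℂ} {u v : ℝ → ℂ}
    (hu : ContDiffOn ℝ 2 u (Ioo (-π) π)) (hv : ContDiffOn ℝ 2 v (Ioo (-π) π))
    (hu'0 : deriv u 0 = 0) (hv0 : v 0 = 1)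
    (huode : ∀ t ∈ Ioo 0 π,
      deriv (deriv u) t + 2 * k * ((cos t : ℂ) / (sin t : ℂ)) * deriv u t = c * u t)
    (hvode : ∀ t ∈ Ioo 0 π, deriv (deriv v) t
      + 2 * (k + 1 : ℕ) * ((cos t : ℂ) / (sin t : ℂ)) * deriv v t = (c + (2 * k + 1)) * v t) :
    ∀ t ∈ Ioo 0 π, deriv u t / sin t = c * u 0 / (2 * k + 1) * v t := by
  have h0 : Ioo (-π) π ∈ 𝓝 (0 : ℝ) := Ioo_mem_nhds (by linarith [pi_pos]) pi_pos
  have hsub : Ioo 0 π ⊆ Ioo (-π) π := Ioo_subset_Ioo_left (by linarith [pi_pos])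
  have hU := isRadialSolution_of_contDiffOn (hu.mono hsub) huode
  have hV := isRadialSolution_of_contDiffOn (hv.mono hsub) hvode
  exact hU.div_sin.eq_const_mul_of_tendsto hV
    (tendsto_deriv_div_sin hu isOpen_Ioo (mem_of_mem_nhds h0) hu'0 huode)
    (hv0 ▸ (hv.continuousOn.continuousAt h0).tendsto.mono_left nhdsWithin_le_nhds)
    (tendsto_sin_pow_mul_wronskian_div_sin (hu.continuousOn.continuousAt h0)
      ((hu.continuousOn_deriv_of_isOpen isOpen_Ioo one_le_two).continuousAt h0) hu'0
      (hv.continuousOn.continuousAt h0)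
      ((hv.continuousOn_deriv_of_isOpen isOpen_Ioo one_le_two).continuousAt h0))

/-- The recursion `(1/sin r)(d/dr) φ_{λ,k}(ir) = ((λ²+k²)/(2k+1)) φ_{λ,k+1}(ir)`
between the analytically continued spherical functions of `H^{2k+1}` and
`H^{2k+3}`. -/
theorem stmt_13 (k : ℕ) (lam : ℝ) (u v : ℝ → ℂ)
    (hu : ContDiffOn ℝ (⊤ : ℕ∞) u (Set.Ioo (-Real.pi) Real.pi))
    (hueven : ∀ r : ℝ, u (-r) = u r) (hu0 : u 0 = 1)
    (huode : ∀ r : ℝ, 0 < |r| → |r| < Real.pi →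
      deriv (deriv u) r + 2 * (k : ℂ) * ((Real.cos r : ℂ) / (Real.sin r : ℂ)) * deriv u r
        = (((lam : ℂ)) ^ 2 + (k : ℂ) ^ 2) * u r)
    (hv : ContDiffOn ℝ (⊤ : ℕ∞) v (Set.Ioo (-Real.pi) Real.pi))
    (hveven : ∀ r : ℝ, v (-r) = v r) (hv0 : v 0 = 1)
    (hvode : ∀ r : ℝ, 0 < |r| → |r| < Real.pi →
      deriv (deriv v) r
          + 2 * ((k : ℂ) + 1) * ((Real.cos r : ℂ) / (Real.sin r : ℂ)) * deriv v r
        = (((lam : ℂ)) ^ 2 + ((k : ℂ) + 1) ^ 2) * v r) :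
    ∀ r : ℝ, 0 < |r| → |r| < Real.pi →
      deriv u r / (Real.sin r : ℂ)
        = ((((lam : ℂ)) ^ 2 + (k : ℂ) ^ 2) / (2 * (k : ℂ) + 1)) * v r := by
  have habs : ∀ {r : ℝ}, r ∈ Ioo 0 π → 0 < |r| ∧ |r| < π := fun hr => by rwa [abs_of_pos hr.1]
  have hu'0 : deriv u 0 = 0 := self_eq_neg.1 (by simpa using deriv_neg_of_even hueven 0)
  have key := deriv_div_sin_eq_const_mul (hu.of_le (WithTop.coe_le_coe.2 le_top))
    (hv.of_le (WithTop.coe_le_coe.2 le_top)) hu'0 hv0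
    (fun t ht => huode t (habs ht).1 (habs ht).2) fun t ht => by
      simp only [Nat.cast_add, Nat.cast_one]
      linear_combination hvode t (habs ht).1 (habs ht).2
  rw [hu0, mul_one] at key
  intro r hr0 hrπ
  rcases (abs_pos.1 hr0).lt_or_gt with hr | hr
  · rw [abs_of_neg hr] at hrπ
    calc deriv u r / (sin r : ℂ) = deriv u (-r) / (sin (-r) : ℂ) := by
          rw [deriv_neg_of_even hueven, sin_neg, Complex.ofReal_neg, neg_div_neg_eq]
      _ = _ := by rw [key (-r) ⟨neg_pos.2 hr, hrπ⟩, hveven]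
  · rw [abs_of_pos hr] at hrπ
    exact key r ⟨hr, hrπ⟩
end

section
/- Let k ≥ 0 be an integer and μ ∈ ℂ. If u, v : ℝ → ℂ are smooth on (−π, π), even, satisfy u(0) = v(0), and both satisfy the equation w″(r) + 2k·(cos r/sin r)·w′(r) = μ·w(r) for all 0 < r < π, then u(r) = v(r) for all r ∈ (−π, π). -/
/-!
The difference `w = u - v` is even, so `w 0 = 0` and `w' 0 = 0`. Multiplying the equation by the
integrating factor `sin ^ n` (here `n = 2k`) turns it into `(sin ^ n * w')' = μ * sin ^ n * w`,
which has no singularity at `0`. Integrating from `0`, and using `sin s * sin b ≤ sin t` for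
`0 ≤ s ≤ t ≤ b < π`, gives `‖w' t‖ ≤ ‖μ‖ / sin b ^ n * ∫₀ᵗ ‖w‖` on `[0, b]`; together with
`‖w t‖ ≤ ∫₀ᵗ ‖w'‖`, Grönwall's inequality applied to `‖w‖ + ‖w'‖` forces `w = 0` on `[0, π)`,
and evenness extends this to `(-π, π)`.
-/

open Real Set intervalIntegral

lemma Real.sin_mul_sin_le_sin {s r b : ℝ} (hs : 0 ≤ s) (hsr : s ≤ r) (hrb : r ≤ b) (hb : b ≤ π) :
    sin s * sin b ≤ sin r := by
  have hs0 : 0 ≤ sin s := sin_nonneg_of_nonneg_of_le_pi hs (by linarith)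
  have hb0 : 0 ≤ sin b := sin_nonneg_of_nonneg_of_le_pi (by linarith) hb
  rcases le_or_gt r (π / 2) with hr | hr
  · have : sin s ≤ sin r := sin_le_sin_of_le_of_le_pi_div_two (by linarith [pi_pos]) hr hsr
    nlinarith [sin_le_one b]
  · have : sin b ≤ sin r := by
      rw [← sin_pi_sub b, ← sin_pi_sub r]
      exact sin_le_sin_of_le_of_le_pi_div_two (by linarith) (by linarith) (by linarith)
    nlinarith [sin_le_one s]

theorem eq_zero_of_le_mul_integral {q : ℝ → ℝ} {K a b : ℝ} (hq : ContinuousOn q (Icc a b))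
    (hq0 : ∀ t ∈ Icc a b, 0 ≤ q t) (hle : ∀ t ∈ Icc a b, q t ≤ K * ∫ s in a..t, q s) :
    ∀ t ∈ Icc a b, q t = 0 := by
  set F : ℝ → ℝ := fun t => ∫ s in a..t, q s
  have hF : ∀ t ∈ Icc a b, HasDerivWithinAt F (q t) (Icc a b) t := fun t ht => by
    have : Fact (t ∈ Icc a b) := ⟨ht⟩
    exact integral_hasDerivWithinAt_right
      ((hq.mono (Icc_subset_Icc_right ht.2)).intervalIntegrable_of_Icc ht.1)
      (hq.stronglyMeasurableAtFilter_nhdsWithin measurableSet_Icc t) (hq t ht)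
  have hF0 : ∀ t ∈ Icc a b, 0 ≤ F t := fun t ht =>
    integral_nonneg ht.1 fun s hs => hq0 s ⟨hs.1, hs.2.trans ht.2⟩
  have hFzero : ∀ t ∈ Icc a b, F t = 0 := by
    refine eq_zero_of_abs_deriv_le_mul_abs_self_of_eq_zero_right (f' := q) (K := K)
      (HasDerivWithinAt.continuousOn hF) (fun t ht => ?_) integral_same (fun t ht => ?_)
    · exact (hF t (Ico_subset_Icc_self ht)).mono_of_mem_nhdsWithin (Icc_mem_nhdsGE_of_mem ht)
    · rw [Real.norm_of_nonneg (hq0 t (Ico_subset_Icc_self ht)),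
        Real.norm_of_nonneg (hF0 t (Ico_subset_Icc_self ht))]
      exact hle t (Ico_subset_Icc_self ht)
  intro t ht
  have := hle t ht
  rw [show (∫ s in a..t, q s) = 0 from hFzero t ht, mul_zero] at this
  exact le_antisymm this (hq0 t ht)

theorem Function.Even.deriv {𝕜 F : Type*} [NontriviallyNormedField 𝕜] [NormedAddCommGroup F]
    [NormedSpace 𝕜 F] {f : 𝕜 → F} (hf : f.Even) : (_root_.deriv f).Odd := fun x => by
  rw [← neg_neg (_root_.deriv f (-x)), ← deriv_comp_neg, funext hf]

lemma hasDerivAt_sin_pow_mul {f : ℝ → ℂ} {f' : ℂ} {x : ℝ} (n : ℕ) (hx : sin x ≠ 0)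
    (hf : HasDerivAt f f' x) :
    HasDerivAt (fun s => (sin s : ℂ) ^ n * f s)
      ((sin x : ℂ) ^ n * (f' + n * (cos x / sin x) * f x)) x := by
  have hsin : HasDerivAt (fun s : ℝ => (sin s : ℂ)) (cos x) x := (hasDerivAt_sin x).ofReal_comp
  refine ((hsin.pow n).mul hf).congr_deriv ?_
  have hx' : (sin x : ℂ) ≠ 0 := by exact_mod_cast hx
  rcases n with _ | n
  · simp
  · simp only [Pi.pow_apply, Nat.add_sub_cancel]
    field_simp
    push_cast
    ring

/-- The radial eigenvalue equation `w'' + n cot r · w' = μ w` of the Laplacian on `S^(n+1)`. -/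
def SolvesRadialEq (n : ℕ) (μ : ℂ) (w : ℝ → ℂ) : Prop :=
  ∀ r : ℝ, 0 < r → r < π →
    deriv (deriv w) r + n * ((cos r : ℂ) / (sin r : ℂ)) * deriv w r = μ * w r

namespace SolvesRadialEq

variable {n : ℕ} {μ : ℂ}

lemma sub {u v : ℝ → ℂ} (hu : ContDiffOn ℝ 2 u (Ioo 0 π)) (hv : ContDiffOn ℝ 2 v (Ioo 0 π))
    (hu' : SolvesRadialEq n μ u) (hv' : SolvesRadialEq n μ v) : SolvesRadialEq n μ (u - v) := by
  intro r hr0 hrπ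
  have hr : Ioo 0 π ∈ nhds r := Ioo_mem_nhds hr0 hrπ
  have hdiff : ∀ f : ℝ → ℂ, ContDiffOn ℝ 2 f (Ioo 0 π) →
      (∀ᶠ s in nhds r, DifferentiableAt ℝ f s) ∧ DifferentiableAt ℝ (deriv f) r := fun f hf =>
    ⟨Filter.mem_of_superset hr fun s hs =>
      (hf.differentiableOn (by norm_num)).differentiableAt (Ioo_mem_nhds hs.1 hs.2),
     ((hf.deriv_of_isOpen isOpen_Ioo (m := 1) (by norm_num)).differentiableOn
      one_ne_zero).differentiableAt hr⟩
  obtain ⟨hu1, hu2⟩ := hdiff u hu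
  obtain ⟨hv1, hv2⟩ := hdiff v hv
  have hderiv : deriv (u - v) =ᶠ[nhds r] deriv u - deriv v := by
    filter_upwards [hu1, hv1] with s hus hvs using deriv_sub hus hvs
  rw [hderiv.deriv_eq, hderiv.eq_of_nhds, deriv_sub hu2 hv2]
  simp only [Pi.sub_apply]
  linear_combination hu' r hr0 hrπ - hv' r hr0 hrπ

variable {w : ℝ → ℂ}

lemma norm_deriv_le (hw : ContDiffOn ℝ 2 w (Ioo (-π) π)) (hsol : SolvesRadialEq n μ w)
    (hw0' : deriv w 0 = 0) {t b : ℝ} (ht : t ∈ Icc 0 b) (hb : b < π) :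
    ‖deriv w t‖ ≤ ‖μ‖ / sin b ^ n * ∫ s in 0..t, ‖w s‖ := by
  rcases ht.1.eq_or_lt with rfl | ht0
  · simp [hw0']
  have hS : Icc 0 t ⊆ Ioo (-π) π := fun s hs =>
    ⟨by linarith [hs.1, pi_pos], by linarith [hs.2, ht.2]⟩
  have hsint : 0 < sin t := sin_pos_of_pos_of_lt_pi ht0 (by linarith [ht.2])
  have hsinb : 0 < sin b := sin_pos_of_pos_of_lt_pi (by linarith [ht.2]) hb
  have hw' : ContDiffOn ℝ 1 (deriv w) (Ioo (-π) π) := hw.deriv_of_isOpen isOpen_Ioo (by norm_num)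
  set g : ℝ → ℂ := fun s => (sin s : ℂ) ^ n * deriv w s
  have hg : ∀ s ∈ Ioo 0 t, HasDerivAt g ((sin s : ℂ) ^ n * (μ * w s)) s := fun s hs => by
    have hsS : s ∈ Ioo (-π) π := hS (Ioo_subset_Icc_self hs)
    rw [← hsol s hs.1 (by linarith [hs.2, ht.2])]
    exact hasDerivAt_sin_pow_mul n (sin_pos_of_pos_of_lt_pi hs.1 (by linarith [hs.2, ht.2])).ne'
      ((hw'.differentiableOn one_ne_zero).differentiableAt (Ioo_mem_nhds hsS.1 hsS.2)).hasDerivAt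
  have hmain : ‖g t - g 0‖ ≤ ∫ s in 0..t, (sin t / sin b) ^ n * ‖μ‖ * ‖w s‖ := by
    refine norm_sub_le_integral_of_norm_deriv_le_of_le ht0.le
      ((Continuous.continuousOn (by fun_prop)).mul (hw'.continuousOn.mono hS))
      (fun s hs => (hg s hs).differentiableAt.differentiableWithinAt)
      (Filter.Eventually.of_forall fun s hs => ?_)
      ((continuousOn_const.mul (hw.continuousOn.mono hS).norm).intervalIntegrable_of_Icc ht0.le)
    have hsins : 0 ≤ sin s := sin_nonneg_of_nonneg_of_le_pi hs.1.le (by linarith [hs.2, ht.2])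
    have hratio : sin s ≤ sin t / sin b := by
      rw [le_div_iff₀ hsinb]
      exact sin_mul_sin_le_sin hs.1.le hs.2.le ht.2 hb.le
    rw [(hg s hs).deriv, norm_mul, norm_mul, norm_pow, Complex.norm_real,
      Real.norm_of_nonneg hsins, ← mul_assoc]
    gcongr
  have hg0 : g 0 = 0 := by simp [g, hw0']
  have hgt : ‖g t‖ = sin t ^ n * ‖deriv w t‖ := by
    simp only [g, norm_mul, norm_pow, Complex.norm_real, Real.norm_of_nonneg hsint.le]
  rw [hg0, sub_zero, hgt, integral_const_mul, div_pow, div_mul_eq_mul_div, div_mul_eq_mul_div,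
    mul_assoc, le_div_iff₀ (by positivity), mul_assoc] at hmain
  rw [div_mul_eq_mul_div, le_div_iff₀ (by positivity)]
  exact le_of_mul_le_mul_left hmain (pow_pos hsint n)

theorem eq_zero_of_eq_zero_of_deriv_eq_zero (hw : ContDiffOn ℝ 2 w (Ioo (-π) π))
    (hsol : SolvesRadialEq n μ w) (hw0 : w 0 = 0) (hw0' : deriv w 0 = 0) :
    ∀ r ∈ Ico 0 π, w r = 0 := by
  intro r hr
  obtain ⟨b, hrb, hb⟩ := exists_between hr.2
  have hS : Icc 0 b ⊆ Ioo (-π) π := fun s hs => ⟨by linarith [hs.1, pi_pos], by linarith [hs.2]⟩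
  have hwc : ContinuousOn w (Icc 0 b) := hw.continuousOn.mono hS
  have hw'c : ContinuousOn (deriv w) (Icc 0 b) :=
    (hw.deriv_of_isOpen isOpen_Ioo (m := 1) (by norm_num)).continuousOn.mono hS
  have hbound : ∀ t ∈ Icc 0 b,
      ‖w t‖ + ‖deriv w t‖ ≤ (1 + ‖μ‖ / sin b ^ n) * ∫ s in 0..t, ‖w s‖ + ‖deriv w s‖ := by
    intro t ht
    have htb : Icc 0 t ⊆ Icc 0 b := Icc_subset_Icc_right ht.2
    have hwint : IntervalIntegrable (‖w ·‖) MeasureTheory.volume 0 t :=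
      (hwc.mono htb).norm.intervalIntegrable_of_Icc ht.1
    have hw'int : IntervalIntegrable (‖deriv w ·‖) MeasureTheory.volume 0 t :=
      (hw'c.mono htb).norm.intervalIntegrable_of_Icc ht.1
    have hwt : ‖w t‖ ≤ ∫ s in 0..t, ‖deriv w s‖ := by
      simpa [hw0] using norm_sub_le_integral_of_norm_deriv_le_of_le ht.1 (hwc.mono htb)
        ((hw.differentiableOn (by norm_num)).mono (Ioo_subset_Icc_self.trans (htb.trans hS)))
        (Filter.Eventually.of_forall fun _ _ => le_rfl) hw'int
    have hw't := hsol.norm_deriv_le hw hw0' ht hb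
    have hC : 0 ≤ ‖μ‖ / sin b ^ n := div_nonneg (norm_nonneg μ)
      (pow_nonneg (sin_nonneg_of_nonneg_of_le_pi (hr.1.trans hrb.le) hb.le) n)
    have hIw : 0 ≤ ∫ s in 0..t, ‖w s‖ := integral_nonneg ht.1 fun s _ => norm_nonneg (w s)
    have hIw' : 0 ≤ ∫ s in 0..t, ‖deriv w s‖ :=
      integral_nonneg ht.1 fun s _ => norm_nonneg (deriv w s)
    rw [integral_add hwint hw'int]
    nlinarith
  have hq := eq_zero_of_le_mul_integral (q := fun s => ‖w s‖ + ‖deriv w s‖)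
    (hwc.norm.add hw'c.norm) (fun t _ => by positivity) hbound r ⟨hr.1, hrb.le⟩
  exact norm_eq_zero.1 (by linarith [norm_nonneg (w r), norm_nonneg (deriv w r)])

end SolvesRadialEq

/-- Uniqueness of smooth even eigenfunctions of the radial spherical Laplacian
`d²/dr² + 2k (cos r/sin r) d/dr` on `(-π, π)` with a prescribed value at the
origin. -/
theorem stmt_14 (k : ℕ) (μ : ℂ) (u v : ℝ → ℂ)
    (hu : ContDiffOn ℝ (⊤ : ℕ∞) u (Set.Ioo (-Real.pi) Real.pi))
    (hv : ContDiffOn ℝ (⊤ : ℕ∞) v (Set.Ioo (-Real.pi) Real.pi))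
    (hueven : ∀ r : ℝ, u (-r) = u r) (hveven : ∀ r : ℝ, v (-r) = v r)
    (h0 : u 0 = v 0)
    (huode : ∀ r : ℝ, 0 < r → r < Real.pi →
      deriv (deriv u) r + 2 * (k : ℂ) * ((Real.cos r : ℂ) / (Real.sin r : ℂ)) * deriv u r
        = μ * u r)
    (hvode : ∀ r : ℝ, 0 < r → r < Real.pi →
      deriv (deriv v) r + 2 * (k : ℂ) * ((Real.cos r : ℂ) / (Real.sin r : ℂ)) * deriv v r
        = μ * v r) :
    ∀ r ∈ Set.Ioo (-Real.pi) Real.pi, u r = v r := by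
  have hu2 : ContDiffOn ℝ 2 u (Ioo (-π) π) := hu.of_le (WithTop.coe_le_coe.2 le_top)
  have hv2 : ContDiffOn ℝ 2 v (Ioo (-π) π) := hv.of_le (WithTop.coe_le_coe.2 le_top)
  have hsol : SolvesRadialEq (2 * k) μ (u - v) := by
    have hsub : Ioo 0 π ⊆ Ioo (-π) π := Ioo_subset_Ioo_left (by linarith [pi_pos])
    refine SolvesRadialEq.sub (hu2.mono hsub) (hv2.mono hsub) ?_ ?_ <;> intro r hr0 hrπ <;>
      rw [Nat.cast_mul, Nat.cast_ofNat]
    exacts [huode r hr0 hrπ, hvode r hr0 hrπ]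
  have heven : (u - v).Even := fun r => by simp only [Pi.sub_apply, hueven r, hveven r]
  have hzero := hsol.eq_zero_of_eq_zero_of_deriv_eq_zero (hu2.sub hv2) (sub_eq_zero.2 h0)
    heven.deriv.map_zero
  intro r hr
  have habs : (u - v) |r| = (u - v) r := by
    rcases abs_choice r with h | h <;> simp only [h, heven r]
  rw [← sub_eq_zero, ← Pi.sub_apply, ← habs]
  exact hzero |r| ⟨abs_nonneg r, abs_lt.2 hr⟩
end
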